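/- Let c be a positive integer, let a and b be integers with gcd(a, c) = 1 and gcd(b, c) = 1, let t be an integer, and let a' be an integer with a·a' ≡ 1 (mod c). Then Σ_{m=0}^{c−1} ((−a'(bm + t)/c)) · ((m/c)) − 1/(4c) ≥ −c/12 − 5/(12c), where ((x)) := x − ⌊x⌋ − 1/2. (This is the corrected lower bound on the Fourier–Dedekind sum σ_t(a, b; c), expressed via its sawtooth-sum representation.) -/
import Mathlib

/-- The sawtooth function `((x)) = x - ⌊x⌋ - 1/2`. -/
noncomputable def sawtooth (x : ℝ) : ℝ := x - ⌊x⌋ - 1 / 2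

open Finset

private lemma sum_id_real (n : ℕ) : ∑ i ∈ range n, (i : ℝ) = n * (n - 1) / 2 := by
  induction n with
  | zero => simp
  | succ k ih => rw [sum_range_succ, ih]; push_cast; ring

private lemma sum_sq_real (n : ℕ) :
    ∑ i ∈ range n, (i : ℝ) ^ 2 = n * (n - 1) * (2 * n - 1) / 6 := by
  induction n with
  | zero => simp
  | succ k ih => rw [sum_range_succ, ih]; push_cast; ring

private lemma S_val (c : ℕ) (hc : 0 < c) :
    ∑ j ∈ range c, ((j : ℝ) / c - 1 / 2) ^ 2 = (c : ℝ) / 12 + 1 / (6 * (c : ℝ)) := by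
  have hc0 : (c : ℝ) ≠ 0 := by positivity
  have h : ∀ j ∈ range c, ((j : ℝ) / c - 1 / 2) ^ 2
      = (j : ℝ) ^ 2 * (1 / c ^ 2) - (j : ℝ) * (1 / c) + 1 / 4 := by
    intro j _; field_simp; ring
  rw [sum_congr rfl h, sum_add_distrib, sum_sub_distrib, ← sum_mul, ← sum_mul,
    sum_sq_real, sum_id_real, sum_const, card_range]
  field_simp
  ring

private lemma floor_int_div_nat (n : ℤ) (c : ℕ) : ⌊(n : ℝ) / (c : ℝ)⌋ = n / (c : ℤ) := by
  rw [show (n : ℝ) / (c : ℝ) = (((n : ℚ) / (c : ℚ) : ℚ) : ℝ) by push_cast; ring,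
    Rat.floor_cast, Rat.floor_intCast_div_natCast]

private lemma sawtooth_int_div (c : ℕ) (hc : 0 < c) (n : ℤ) :
    sawtooth ((n : ℝ) / c) = ((n % (c : ℤ) : ℤ) : ℝ) / c - 1 / 2 := by
  have hc0 : (c : ℝ) ≠ 0 := by positivity
  rw [sawtooth, floor_int_div_nat]
  have : (n % (c : ℤ)) = n - (c : ℤ) * (n / (c : ℤ)) := Int.emod_def n c
  rw [this]
  push_cast
  field_simp

private lemma sum_emod_bij (c : ℕ) (hc : 0 < c) (u v : ℤ) (hu : IsCoprime u (c : ℤ))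
    (F : ℕ → ℝ) :
    ∑ m ∈ range c, F ((((u * m + v) % (c : ℤ)).toNat)) = ∑ j ∈ range c, F j := by
  set φ : ℕ → ℕ := fun m => ((u * m + v) % (c : ℤ)).toNat with hφ
  have hcZ : (0 : ℤ) < (c : ℤ) := mod_cast hc
  have hmem : ∀ m ∈ range c, φ m ∈ range c := by
    intro m _
    simp only [hφ, mem_range]
    have h1 : (u * m + v) % (c : ℤ) < c := Int.emod_lt_of_pos _ hcZ
    have h2 : 0 ≤ (u * m + v) % (c : ℤ) := Int.emod_nonneg _ (by omega)
    omega
  have hinj : ∀ x ∈ range c, ∀ y ∈ range c, φ x = φ y → x = y := by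
    intro x hx y hy hxy
    have h2x : 0 ≤ (u * x + v) % (c : ℤ) := Int.emod_nonneg _ (by omega)
    have h2y : 0 ≤ (u * y + v) % (c : ℤ) := Int.emod_nonneg _ (by omega)
    have hmod : (u * x + v) % (c : ℤ) = (u * y + v) % (c : ℤ) := by
      simp only [hφ] at hxy; omega
    have hdvd : (c : ℤ) ∣ u * ((x : ℤ) - y) := by
      have hd := Int.ModEq.dvd (hmod : Int.ModEq (c : ℤ) (u * x + v) (u * y + v))
      rw [show u * y + v - (u * x + v) = -(u * ((x : ℤ) - y)) by ring] at hd
      exact dvd_neg.mp hd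
    have hdvd2 : (c : ℤ) ∣ ((x : ℤ) - y) := (hu.symm).dvd_of_dvd_mul_left hdvd
    have hxlt : x < c := mem_range.mp hx
    have hylt : y < c := mem_range.mp hy
    have : ((x : ℤ) - y) = 0 := Int.eq_zero_of_abs_lt_dvd hdvd2 (by
      rw [abs_sub_lt_iff]; constructor <;> omega)
    omega
  have himg : (range c).image φ = range c := by
    apply eq_of_subset_of_card_le
    · intro j hj
      obtain ⟨m, hm, rfl⟩ := mem_image.mp hj
      exact hmem m hm
    · rw [card_image_of_injOn (fun x hx y hy => hinj x hx y hy)]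
  calc ∑ m ∈ range c, F (φ m) = ∑ j ∈ (range c).image φ, F j := (sum_image hinj).symm
    _ = ∑ j ∈ range c, F j := by rw [himg]

/-- Corrected lower bound on the Fourier–Dedekind sum `σ_t(a, b; c)`, expressed
via its sawtooth-sum representation: for `a, b` coprime to `c > 0`, `t ∈ ℤ`,
and `a'` an inverse of `a` modulo `c`,
`∑_{m=0}^{c-1} ((-a'(bm+t)/c)) ((m/c)) - 1/(4c) ≥ -c/12 - 5/(12c)`. -/
theorem fourier_dedekind_sum_lower_bound (c : ℕ) (hc : 0 < c) (a b : ℤ)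
    (ha : Int.gcd a c = 1) (hb : Int.gcd b c = 1) (t : ℤ) (a' : ℤ)
    (ha' : a * a' ≡ 1 [ZMOD (c : ℤ)]) :
    (∑ m ∈ Finset.range c,
        sawtooth ((-(a' : ℝ) * ((b : ℝ) * (m : ℝ) + (t : ℝ))) / (c : ℝ)) *
          sawtooth ((m : ℝ) / (c : ℝ)))
      - 1 / (4 * (c : ℝ)) ≥ -(c : ℝ) / 12 - 5 / (12 * (c : ℝ)) := by
  have hc0 : (c : ℝ) ≠ 0 := by positivity
  have hcZ : (0 : ℤ) < (c : ℤ) := mod_cast hc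
  set u : ℤ := -a' * b with hu_def
  set v : ℤ := -a' * t with hv_def
  -- coprimality of a' with c
  have ha'c : IsCoprime a' (c : ℤ) := by
    obtain ⟨k, hk⟩ := Int.ModEq.dvd ha'
    exact ⟨a, k, by linear_combination -hk⟩
  have hbc : IsCoprime b (c : ℤ) := Int.isCoprime_iff_gcd_eq_one.mpr hb
  have huc : IsCoprime u (c : ℤ) := by
    rw [hu_def, neg_mul]
    exact (ha'c.mul_left hbc).neg_left
  -- rewrite the two sawtooth factors
  have harg : ∀ m : ℕ, (-(a' : ℝ) * ((b : ℝ) * (m : ℝ) + (t : ℝ))) / (c : ℝ)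
      = (((u * m + v : ℤ) : ℝ)) / c := by
    intro m; push_cast [hu_def, hv_def]; ring
  have hf : ∀ m : ℕ, sawtooth ((-(a' : ℝ) * ((b : ℝ) * (m : ℝ) + (t : ℝ))) / (c : ℝ))
      = ((((u * m + v) % (c : ℤ)).toNat : ℝ)) / c - 1 / 2 := by
    intro m
    have h0 : 0 ≤ (u * m + v) % (c : ℤ) := Int.emod_nonneg _ (by omega)
    have hcast : ((((u * m + v) % (c : ℤ)).toNat : ℕ) : ℝ) = (((u * m + v) % (c : ℤ) : ℤ) : ℝ) := by
      exact_mod_cast congrArg (Int.cast : ℤ → ℝ) (Int.toNat_of_nonneg h0)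
    rw [harg m, sawtooth_int_div c hc, hcast]
  have hg : ∀ m ∈ range c, sawtooth ((m : ℝ) / (c : ℝ)) = (m : ℝ) / c - 1 / 2 := by
    intro m hm
    have hmc : ((m : ℤ)) % (c : ℤ) = (m : ℤ) := by
      apply Int.emod_eq_of_lt (by positivity)
      exact_mod_cast mem_range.mp hm
    have := sawtooth_int_div c hc (m : ℤ)
    rw [hmc] at this
    simpa using this
  -- the sum of squares S
  set S : ℝ := ∑ j ∈ range c, ((j : ℝ) / c - 1 / 2) ^ 2 with hS_def
  have hSval : S = c / 12 + 1 / (6 * c) := S_val c hc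
  -- sum of squares of f equals S by the bijection
  have hfsq : ∑ m ∈ range c,
      (sawtooth ((-(a' : ℝ) * ((b : ℝ) * (m : ℝ) + (t : ℝ))) / (c : ℝ))) ^ 2 = S := by
    have := sum_emod_bij c hc u v huc (fun j => ((j : ℝ) / c - 1 / 2) ^ 2)
    rw [hS_def, ← this]
    exact sum_congr rfl fun m _ => by rw [hf m]
  have hgsq : ∑ m ∈ range c, (sawtooth ((m : ℝ) / (c : ℝ))) ^ 2 = S := by
    rw [hS_def]
    exact sum_congr rfl fun m hm => by rw [hg m hm]
  -- pointwise AM-GM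
  have hpt : ∀ m ∈ range c,
      sawtooth ((-(a' : ℝ) * ((b : ℝ) * (m : ℝ) + (t : ℝ))) / (c : ℝ)) *
        sawtooth ((m : ℝ) / (c : ℝ))
      ≥ -((sawtooth ((-(a' : ℝ) * ((b : ℝ) * (m : ℝ) + (t : ℝ))) / (c : ℝ))) ^ 2
          + (sawtooth ((m : ℝ) / (c : ℝ))) ^ 2) / 2 := by
    intro m _
    set x := sawtooth ((-(a' : ℝ) * ((b : ℝ) * (m : ℝ) + (t : ℝ))) / (c : ℝ))
    set y := sawtooth ((m : ℝ) / (c : ℝ))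
    nlinarith [sq_nonneg (x + y)]
  have hsum : (∑ m ∈ Finset.range c,
      sawtooth ((-(a' : ℝ) * ((b : ℝ) * (m : ℝ) + (t : ℝ))) / (c : ℝ)) *
        sawtooth ((m : ℝ) / (c : ℝ))) ≥ -S := by
    calc (∑ m ∈ Finset.range c,
        sawtooth ((-(a' : ℝ) * ((b : ℝ) * (m : ℝ) + (t : ℝ))) / (c : ℝ)) *
          sawtooth ((m : ℝ) / (c : ℝ)))
        ≥ ∑ m ∈ range c, -((sawtooth ((-(a' : ℝ) * ((b : ℝ) * (m : ℝ) + (t : ℝ))) / (c : ℝ))) ^ 2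
          + (sawtooth ((m : ℝ) / (c : ℝ))) ^ 2) / 2 := sum_le_sum hpt
      _ = -S := by
          simp only [neg_div, sum_neg_distrib]
          rw [← sum_div, sum_add_distrib, hfsq, hgsq]
          ring
  have hkey : 1 / (6 * (c : ℝ)) + 1 / (4 * c) = 5 / (12 * c) := by
    field_simp; ring
  rw [hSval] at hsum
  linarith
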